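/- For all real r > a > 0, D₁ > 0 and T_b > 0, the integral ∫₀^{T_b} (a/√(4·π·D₁·τ³))·(1 − a/r)·exp(−(r−a)²/(4·D₁·τ)) dτ equals (a/r)·erfc( (r−a)/(2·√(D₁·T_b)) ), where erfc is the complementary error function. -/

import Mathlib

/-!
The function `τ ↦ (a / r) * erfc ((r - a) / (2 * √(D₁ * τ)))` is an antiderivative of the integrand
on `(0, ∞)`, by the chain rule and `erf' x = 2 / √π * exp (-x ^ 2)`. As `τ → 0⁺` its argument tends
to `+∞`, where `erfc` tends to `0` by the Gaussian integral. Since the integrand is nonnegative it is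
integrable, and the fundamental theorem of calculus gives the value at `Tb`.
-/

open MeasureTheory Real

/-- The Gauss error function. -/
noncomputable def erf (x : ℝ) : ℝ :=
  (2 / Real.sqrt π) * ∫ u in (0:ℝ)..x, Real.exp (-u ^ 2)

/-- The complementary error function. -/
noncomputable def erfc (x : ℝ) : ℝ := 1 - erf x

open Filter Set Topology

theorem intervalIntegral.integral_eq_sub_of_hasDerivAt_of_tendsto_nhdsGT_of_nonneg
    {f f' : ℝ → ℝ} {a b fa : ℝ} (hab : a < b)
    (hderiv : ∀ x ∈ Ioc a b, HasDerivAt f (f' x) x) (hf' : ∀ x ∈ Ioo a b, 0 ≤ f' x)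
    (ha : Tendsto f (𝓝[>] a) (𝓝 fa)) :
    ∫ x in a..b, f' x = f b - fa := by
  classical
  set F := Function.update f a fa
  have hFderiv : ∀ x ∈ Ioo a b, HasDerivAt F (f' x) x := fun x hx =>
    (hderiv x (Ioo_subset_Ioc_self hx)).congr_of_eventuallyEq <| by
      filter_upwards [Ioi_mem_nhds hx.1] with y hy using Function.update_of_ne hy.ne' _ _
  have hFcont : ContinuousOn F (Icc a b) := by
    rw [continuousOn_update_iff, Icc_sdiff_left]
    exact ⟨fun x hx => (hderiv x hx).continuousAt.continuousWithinAt,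
      fun _ => ha.mono_left (nhdsWithin_mono _ Ioc_subset_Ioi_self)⟩
  have hint : IntervalIntegrable f' volume a b :=
    (intervalIntegrable_iff_integrableOn_Ioc_of_le hab.le).2
      (integrableOn_deriv_of_nonneg hFcont hFderiv hf')
  simpa [F, hab.ne'] using integral_eq_sub_of_hasDerivAt_of_le hab.le hFcont hFderiv hint

theorem hasDerivAt_erf (x : ℝ) : HasDerivAt erf (2 / √π * exp (-x ^ 2)) x :=
  ((continuous_exp.comp (continuous_pow 2).neg).integral_hasStrictDerivAt 0 x).hasDerivAt
    |>.const_mul _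

theorem hasDerivAt_erfc (x : ℝ) : HasDerivAt erfc (-(2 / √π * exp (-x ^ 2))) x :=
  (hasDerivAt_erf x).const_sub 1

theorem tendsto_erf_atTop : Tendsto erf atTop (𝓝 1) := by
  have hint : IntegrableOn (fun u : ℝ => exp (-u ^ 2)) (Ioi 0) := by
    simpa using (integrable_exp_neg_mul_sq one_pos).integrableOn
  have hgauss : ∫ u in Ioi (0:ℝ), exp (-u ^ 2) = √π / 2 := by
    simpa using integral_gaussian_Ioi 1
  have hsqrtπ : √π ≠ 0 := (sqrt_pos.2 pi_pos).ne'
  have h := (intervalIntegral_tendsto_integral_Ioi 0 hint tendsto_id).const_mul (2 / √π)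
  rwa [hgauss, div_mul_div_comm, mul_comm, div_self (mul_ne_zero hsqrtπ two_ne_zero)] at h

theorem tendsto_erfc_atTop : Tendsto erfc atTop (𝓝 0) := by
  have h := tendsto_erf_atTop.const_sub 1
  rwa [sub_self] at h

theorem tendsto_erfc_div_sqrt_nhdsGT_zero {c D : ℝ} (hc : 0 < c) (hD : 0 < D) :
    Tendsto (fun t => erfc (c / (2 * √(D * t)))) (𝓝[>] 0) (𝓝 0) := by
  have hden : Tendsto (fun t => 2 * √(D * t)) (𝓝[>] 0) (𝓝[>] 0) := by
    refine tendsto_nhdsWithin_iff.2 ⟨?_, ?_⟩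
    · exact ((by fun_prop : Continuous fun t => 2 * √(D * t)).tendsto' 0 0 (by simp)).mono_left
        nhdsWithin_le_nhds
    · filter_upwards [self_mem_nhdsWithin] with t (ht : 0 < t)
      exact mul_pos two_pos (sqrt_pos.2 (mul_pos hD ht))
  refine tendsto_erfc_atTop.comp ?_
  simpa [div_eq_mul_inv] using hden.inv_tendsto_nhdsGT_zero.const_mul_atTop hc

theorem hasDerivAt_erfc_div_sqrt (c : ℝ) {D t : ℝ} (hD : 0 < D) (ht : 0 < t) :
    HasDerivAt (fun t => erfc (c / (2 * √(D * t))))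
      (c / √(4 * π * D * t ^ 3) * exp (-c ^ 2 / (4 * D * t))) t := by
  have hDt : 0 < D * t := mul_pos hD ht
  have hden : HasDerivAt (fun t => 2 * √(D * t)) (2 * (D / (2 * √(D * t)))) t := by
    simpa using (((hasDerivAt_id t).const_mul D).sqrt hDt.ne').const_mul 2
  refine ((hasDerivAt_erfc _).comp t ((hasDerivAt_const t c).fun_div hden (by positivity)))
    |>.congr_deriv ?_
  have hsq : √(D * t) ^ 2 = D * t := sq_sqrt hDt.le
  have hroot : √(4 * π * D * t ^ 3) = 2 * √π * √(D * t) * t := by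
    rw [← sqrt_sq (by positivity : 0 ≤ 2 * √π * √(D * t) * t)]
    congr 1
    rw [mul_pow, mul_pow, mul_pow, sq_sqrt pi_pos.le, hsq]
    ring
  have hexp : -(c / (2 * √(D * t))) ^ 2 = -c ^ 2 / (4 * D * t) := by
    rw [div_pow, mul_pow, hsq]
    ring
  rw [hroot, hexp]
  field_simp
  linear_combination (-c) * hsq

theorem integral_levy_density_eq_erfc {c D T : ℝ} (hc : 0 < c) (hD : 0 < D) (hT : 0 < T) :
    ∫ t in (0:ℝ)..T, c / √(4 * π * D * t ^ 3) * exp (-c ^ 2 / (4 * D * t))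
      = erfc (c / (2 * √(D * T))) := by
  simpa using intervalIntegral.integral_eq_sub_of_hasDerivAt_of_tendsto_nhdsGT_of_nonneg hT
    (fun t ht => hasDerivAt_erfc_div_sqrt c hD ht.1) (fun t _ => by positivity)
    (tendsto_erfc_div_sqrt_nhdsGT_zero hc hD)

/-- The integral of the channel impulse response over a bit interval equals the
absorption probability. -/
theorem integral_CIR_eq_absorption_prob (a D₁ Tb r : ℝ) (ha : 0 < a) (har : a < r)
    (hD₁ : 0 < D₁) (hTb : 0 < Tb) :
    (∫ τ in (0:ℝ)..Tb,
        a / Real.sqrt (4 * π * D₁ * τ ^ 3) * (1 - a / r)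
          * Real.exp (-(r - a) ^ 2 / (4 * D₁ * τ)))
      = a / r * erfc ((r - a) / (2 * Real.sqrt (D₁ * Tb))) := by
  have hr : r ≠ 0 := (ha.trans har).ne'
  have hfactor : ∀ τ, a / √(4 * π * D₁ * τ ^ 3) * (1 - a / r) * exp (-(r - a) ^ 2 / (4 * D₁ * τ))
      = a / r * ((r - a) / √(4 * π * D₁ * τ ^ 3) * exp (-(r - a) ^ 2 / (4 * D₁ * τ))) := by
    intro τ
    field_simp
  simp only [hfactor, intervalIntegral.integral_const_mul,
    integral_levy_density_eq_erfc (sub_pos.2 har) hD₁ hTb]
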